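/- arXiv:1608.03127 — 2 statements merged into one kernel-verified Lean document; each statement's English description precedes it below -/
import Mathlib

section
/- In a WSTS, the backward reachability iteration converges: defining J₀ = J and J_{n+1} = J_n ∪ Pred(J_n) for an upward-closed set J, each upward closure ↑J_n is captured finitely, and there exists k with ↑J_k = ↑J_{k+1}, hence Pred*(J) ⊆ ↑J_k whenever J is upward-closed. -/
/-- Backward reachability iteration in a WSTS converges: the upward closures
of the iterates `J₀ = J`, `J_{n+1} = J_n ∪ Pred(J_n)` stabilise, and
`Pred*(J)` is contained in the stabilised upward closure. -/
theorem wsts_backward_reachability_converges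
    {S : Type*} (le : S → S → Prop) (step : S → S → Prop)
    (hrefl : ∀ a, le a a)
    (htrans : ∀ a b c, le a b → le b c → le a c)
    (hwqo : ∀ s : ℕ → S, ∃ i j : ℕ, i < j ∧ le (s i) (s j))
    (hupsim : ∀ s s' t, step s s' → le s t →
      ∃ t', Relation.ReflTransGen step t t' ∧ le s' t')
    (J : Set S) (hJ : ∀ x y, x ∈ J → le x y → y ∈ J)
    (Jseq : ℕ → Set S)
    (h0 : Jseq 0 = J)
    (hsucc : ∀ n, Jseq (n + 1) = Jseq n ∪ {s | ∃ t ∈ Jseq n, step s t}) :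
    ∃ k : ℕ,
      {y | ∃ x ∈ Jseq k, le x y} = {y | ∃ x ∈ Jseq (k + 1), le x y} ∧
      {s | ∃ t ∈ J, Relation.ReflTransGen step s t} ⊆ {y | ∃ x ∈ Jseq k, le x y} := by
  classical
  let U : ℕ → Set S := fun n => {y | ∃ x ∈ Jseq n, le x y}
  have hmono : Monotone Jseq := by
    apply monotone_nat_of_le_succ
    intro n
    rw [hsucc]
    exact Set.subset_union_left
  have hUmono : Monotone U := by
    intro a b hab y hy
    obtain ⟨x, hx, hxy⟩ := hy
    exact ⟨x, hmono hab hx, hxy⟩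
  have hsub : ∀ n, Jseq n ⊆ U n := fun n x hx => ⟨x, hx, hrefl x⟩
  have hupU : ∀ n x y, x ∈ U n → le x y → y ∈ U n := by
    intro n x y hx hxy
    obtain ⟨z, hz, hzx⟩ := hx
    exact ⟨z, hz, htrans _ _ _ hzx hxy⟩
  have hstab : ∃ k, ∀ n, U n ⊆ U k := by
    by_contra hcon
    push_neg at hcon
    have H : ∀ k, ∃ n x, k < n ∧ x ∈ Jseq n ∧ x ∉ U k := by
      intro k
      obtain ⟨n, hn⟩ := hcon k
      rw [Set.not_subset] at hn
      obtain ⟨y, hyn, hyk⟩ := hn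
      obtain ⟨x, hx, hxy⟩ := hyn
      refine ⟨max n (k + 1), x, ?_, hmono (le_max_left _ _) hx,
        fun hxU => hyk (hupU _ _ _ hxU hxy)⟩
      exact lt_of_lt_of_le (Nat.lt_succ_self k) (le_max_right _ _)
    choose n x hlt hmem hnot using H
    let m : ℕ → ℕ := fun i => Nat.rec 0 (fun _ prev => n prev) i
    have hmsucc : ∀ i, m (i + 1) = n (m i) := fun i => rfl
    have hmmono : StrictMono m := strictMono_nat_of_lt_succ (fun i => hlt (m i))
    obtain ⟨i, j, hij, hle⟩ := hwqo (fun i => x (m i))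
    have h1 : x (m i) ∈ Jseq (m j) := by
      apply hmono (hmmono.monotone (Nat.succ_le_of_lt hij))
      rw [hmsucc]
      exact hmem (m i)
    exact hnot (m j) ⟨x (m i), h1, hle⟩
  obtain ⟨k, hk⟩ := hstab
  refine ⟨k, ?_, ?_⟩
  · exact Set.Subset.antisymm (hUmono (Nat.le_succ k)) (hk (k + 1))
  · rintro s ⟨t, htJ, hst⟩
    have reach : ∃ n, s ∈ Jseq n := by
      induction hst using Relation.ReflTransGen.head_induction_on with
      | refl => exact ⟨0, h0 ▸ htJ⟩
      | head hstep _ ih =>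
        obtain ⟨n, hn⟩ := ih
        refine ⟨n + 1, ?_⟩
        rw [hsucc]
        exact Or.inr ⟨_, hn, hstep⟩
    obtain ⟨n, hn⟩ := reach
    exact hk n (hsub n hn)
end

section
/- In a WSTS with decidable ordering and computable effective pred-basis, the covering problem is decidable: given states s and t, one can decide whether there exists t' with s ⟶* t' and t ⪯ t'. -/
/-!
Saturate `{t}` backwards with the pred-basis: `K₀ = [t]`, `Kₙ₊₁ = Kₙ ++ pb(Kₙ)`, so that `↑Kₙ` is
the set of states covering `t` within `n` steps (soundness uses upward compatibility,
completeness the basis property). The increasing sequence `↑K₀ ⊆ ↑K₁ ⊆ ⋯` cannot grow forever in a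
well-quasi-order, and once `↑Kₙ₊₁ ⊆ ↑Kₙ` it is stationary, so `↑Kₙ` is the set of all states
covering `t`. Whether `Kₙ₊₁` is dominated by `Kₙ` is decidable, so the first such `n` is found by
unbounded search.
-/

open Relation

section ListComputability

variable {α β σ : Type*} [Primcodable α] [Primcodable β] [Primcodable σ]

theorem Computable.list_foldl {f : α → List β} {g : α → σ} {h : α → σ × β → σ}
    (hf : Computable f) (hg : Computable g) (hh : Computable₂ h) :
    Computable fun a => (f a).foldl (fun s b => h a (s, b)) (g a) := by
  open Computable in
  have hrec : Computable fun a => Nat.rec (motive := fun _ => σ) (g a)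
      (fun n s => Option.casesOn (f a)[n]? s fun b => h a (s, b)) (f a).length :=
    nat_rec (list_length.comp hf) hg
      (option_casesOn (list_getElem?.comp (hf.comp fst) (fst.comp snd)) (snd.comp snd)
        (hh.comp (fst.comp fst) (pair (snd.comp (snd.comp fst)) snd)).to₂).to₂
  refine hrec.of_eq fun a => ?_
  suffices ∀ n, Nat.rec (motive := fun _ => σ) (g a)
      (fun n s => Option.casesOn (f a)[n]? s fun b => h a (s, b)) n =
      ((f a).take n).foldl (fun s b => h a (s, b)) (g a) by
    rw [this, List.take_length]
  intro n
  induction n with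
  | zero => rfl
  | succ n ih =>
    rw [List.take_add_one, List.foldl_append, ← ih]
    cases hn : (f a)[n]? <;> simp [hn]

theorem Computable.list_flatMap {f : α → List β} {g : α → β → List σ}
    (hf : Computable f) (hg : Computable₂ g) :
    Computable fun a => (f a).flatMap (g a) :=
  (Computable.list_foldl (h := fun a x => x.1 ++ g a x.2) hf (Computable.const [])
    (Computable.list_append.comp (Computable.fst.comp Computable.snd)
      (hg.comp Computable.fst (Computable.snd.comp Computable.snd))).to₂).of_eq
    fun _ => List.flatMap_eq_foldl.symm

theorem ComputablePred.comp {p : β → Prop} {g : α → β}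
    (hp : ComputablePred p) (hg : Computable g) : ComputablePred fun a => p (g a) := by
  classical
  exact (hp.decide.comp hg).computablePred

theorem ComputablePred.list_exists {l : α → List β} {p : α → β → Prop}
    (hl : Computable l) (hp : ComputablePred fun x : α × β => p x.1 x.2) :
    ComputablePred fun a => ∃ b ∈ l a, p a b := by
  classical
  have foldl_or : ∀ (q : β → Bool) (l : List β) (init : Bool),
      l.foldl (fun acc b => acc || q b) init = (init || l.any q) := by
    intro q l
    induction l with
    | nil => simp
    | cons b l ih => simp [ih, Bool.or_assoc]
  have hany : Computable fun a => (l a).any fun b => decide (p a b) :=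
    (Computable.list_foldl (h := fun a x => x.1 || decide (p a x.2)) hl (Computable.const false)
      (Primrec.or.to_comp.comp (Computable.fst.comp Computable.snd)
        (hp.decide.comp (Computable.pair Computable.fst
          (Computable.snd.comp Computable.snd)))).to₂).of_eq
      fun a => (foldl_or (fun b => decide (p a b)) _ _).trans (Bool.false_or _)
  exact Computable.computablePred (hany.of_eq fun a => by simp [List.any_eq])

theorem ComputablePred.list_forall {l : α → List β} {p : α → β → Prop}
    (hl : Computable l) (hp : ComputablePred fun x : α × β => p x.1 x.2) :
    ComputablePred fun a => ∀ b ∈ l a, p a b :=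
  (ComputablePred.list_exists (p := fun a b => ¬p a b) hl hp.not).not.of_eq fun a => by simp

end ListComputability

namespace WSTS

variable {S : Type*} {step le : S → S → Prop} {pb : S → List S}

/-- `pb s` is a finite basis of `↑Pred(↑s)`. -/
def IsPredBasis (step le : S → S → Prop) (pb : S → List S) : Prop :=
  ∀ s x, (∃ b ∈ pb s, le b x) ↔ ∃ w, (∃ t, le s t ∧ step w t) ∧ le w x

def Covers (step le : S → S → Prop) (s t : S) : Prop :=
  ∃ t', ReflTransGen step s t' ∧ le t t'

def predBasisIter (pb : S → List S) (t : S) : ℕ → List S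
  | 0 => [t]
  | n + 1 => predBasisIter pb t n ++ (predBasisIter pb t n).flatMap pb

/-- `↑Kₙ₊₁ ⊆ ↑Kₙ` for `Kₙ = predBasisIter pb t n`. -/
def Saturated (le : S → S → Prop) (pb : S → List S) (t : S) (n : ℕ) : Prop :=
  ∀ b ∈ predBasisIter pb t (n + 1), ∃ c ∈ predBasisIter pb t n, le c b

theorem mem_predBasisIter_zero {t : S} : t ∈ predBasisIter pb t 0 :=
  List.mem_singleton_self t

theorem predBasisIter_mono {t : S} {m n : ℕ} (hmn : m ≤ n) {b : S}
    (hb : b ∈ predBasisIter pb t m) : b ∈ predBasisIter pb t n := by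
  induction n, hmn using Nat.le_induction with
  | base => exact hb
  | succ n _ ih => exact List.mem_append_left _ ih

theorem mem_predBasisIter_succ {t b : S} {n : ℕ} :
    b ∈ predBasisIter pb t (n + 1) ↔
      b ∈ predBasisIter pb t n ∨ ∃ c ∈ predBasisIter pb t n, b ∈ pb c := by
  simp only [predBasisIter, List.mem_append, List.mem_flatMap]

theorem covers_of_mem_predBasisIter (htrans : ∀ a b c, le a b → le b c → le a c)
    (hupsim : ∀ s s' t, step s s' → le s t → ∃ t', ReflTransGen step t t' ∧ le s' t')
    (hpb : IsPredBasis step le pb) {t : S} :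
    ∀ {n : ℕ} {s b : S}, b ∈ predBasisIter pb t n → le b s → Covers step le s t
  | 0, s, b, hb, hbs => by
    rw [predBasisIter, List.mem_singleton] at hb
    exact ⟨s, .refl, hb ▸ hbs⟩
  | n + 1, s, b, hb, hbs => by
    rcases mem_predBasisIter_succ.1 hb with hb | ⟨c, hc, hbc⟩
    · exact covers_of_mem_predBasisIter htrans hupsim hpb hb hbs
    · obtain ⟨w, ⟨u, hcu, hwu⟩, hws⟩ := (hpb c s).1 ⟨b, hbc, hbs⟩
      obtain ⟨s', hss', hus'⟩ := hupsim w u s hwu hws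
      obtain ⟨t', hs't', htt'⟩ :=
        covers_of_mem_predBasisIter htrans hupsim hpb hc (htrans _ _ _ hcu hus')
      exact ⟨t', hss'.trans hs't', htt'⟩

theorem exists_mem_predBasisIter_of_covers (hrefl : ∀ a, le a a)
    (hpb : IsPredBasis step le pb) {s t : S} (h : Covers step le s t) :
    ∃ n, ∃ b ∈ predBasisIter pb t n, le b s := by
  obtain ⟨u, hsu, htu⟩ := h
  induction hsu using ReflTransGen.head_induction_on with
  | refl => exact ⟨0, t, mem_predBasisIter_zero, htu⟩
  | head hss' _ ih =>
    obtain ⟨n, b, hb, hbs'⟩ := ih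
    obtain ⟨b', hb', hb's⟩ := (hpb b _).2 ⟨_, ⟨_, hbs', hss'⟩, hrefl _⟩
    exact ⟨n + 1, b', mem_predBasisIter_succ.2 (.inr ⟨b, hb, hb'⟩), hb's⟩

theorem exists_saturated (hwqo : ∀ f : ℕ → S, ∃ i j, i < j ∧ le (f i) (f j)) (t : S) :
    ∃ n, Saturated le pb t n := by
  by_contra! h
  simp only [Saturated, not_forall, not_exists, not_and, exists_prop] at h
  choose f hf hfmin using h
  obtain ⟨i, j, hij, hle⟩ := hwqo f
  exact hfmin j (f i) (predBasisIter_mono hij (hf i)) hle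

theorem Saturated.exists_le (hrefl : ∀ a, le a a) (htrans : ∀ a b c, le a b → le b c → le a c)
    (hpb : IsPredBasis step le pb) {t : S} {n : ℕ} (hsat : Saturated le pb t n) :
    ∀ {m : ℕ} {b : S}, b ∈ predBasisIter pb t m → ∃ c ∈ predBasisIter pb t n, le c b
  | 0, b, hb => by
    rw [predBasisIter, List.mem_singleton] at hb
    exact ⟨b, predBasisIter_mono n.zero_le (hb ▸ mem_predBasisIter_zero), hrefl b⟩
  | m + 1, b, hb => by
    rcases mem_predBasisIter_succ.1 hb with hb | ⟨a, ha, hba⟩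
    · exact hsat.exists_le hrefl htrans hpb hb
    obtain ⟨c, hc, hca⟩ := hsat.exists_le hrefl htrans hpb ha
    -- `b ∈ ↑Pred(↑a) ⊆ ↑Pred(↑c)`, so `b` lies above some element of `pb c ⊆ Kₙ₊₁`
    obtain ⟨w, ⟨u, hau, hwu⟩, hwb⟩ := (hpb a b).1 ⟨b, hba, hrefl b⟩
    obtain ⟨b', hb', hb'b⟩ := (hpb c b).2 ⟨w, ⟨u, htrans _ _ _ hca hau, hwu⟩, hwb⟩
    obtain ⟨c', hc', hc'b'⟩ := hsat b' (mem_predBasisIter_succ.2 (.inr ⟨c, hc, hb'⟩))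
    exact ⟨c', hc', htrans _ _ _ hc'b' hb'b⟩

theorem covers_iff_of_saturated (hrefl : ∀ a, le a a)
    (htrans : ∀ a b c, le a b → le b c → le a c)
    (hupsim : ∀ s s' t, step s s' → le s t → ∃ t', ReflTransGen step t t' ∧ le s' t')
    (hpb : IsPredBasis step le pb) {s t : S} {n : ℕ} (hsat : Saturated le pb t n) :
    Covers step le s t ↔ ∃ b ∈ predBasisIter pb t n, le b s := by
  refine ⟨fun h => ?_, fun ⟨b, hb, hbs⟩ => covers_of_mem_predBasisIter htrans hupsim hpb hb hbs⟩
  obtain ⟨m, b, hb, hbs⟩ := exists_mem_predBasisIter_of_covers hrefl hpb h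
  obtain ⟨c, hc, hcb⟩ := hsat.exists_le hrefl htrans hpb hb
  exact ⟨c, hc, htrans _ _ _ hcb hbs⟩

section Computability

variable [Primcodable S]

theorem computable₂_predBasisIter (hpb : Computable pb) : Computable₂ (predBasisIter pb) := by
  open Computable in
  have hrec : Computable fun x : S × ℕ =>
      Nat.rec (motive := fun _ => List S) [x.1] (fun _ K => K ++ K.flatMap pb) x.2 :=
    nat_rec snd (list_cons.comp fst (const []))
      (list_append.comp (snd.comp snd) (list_flatMap (snd.comp snd) (hpb.comp snd).to₂)).to₂
  refine hrec.of_eq fun ⟨t, n⟩ => ?_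
  induction n with
  | zero => rfl
  | succ n ih => simp only [predBasisIter, ← ih]

theorem computablePred_saturated (hle : ComputablePred fun p : S × S => le p.1 p.2)
    (hpb : Computable pb) : ComputablePred fun q : S × ℕ => Saturated le pb q.1 q.2 := by
  open Computable in
  have hK := computable₂_predBasisIter hpb
  exact .list_forall (hK.comp fst (succ.comp snd))
    (.list_exists (hK.comp (fst.comp fst) (snd.comp fst)) (hle.comp (pair snd (snd.comp fst))))

end Computability

end WSTS

open WSTS in
theorem wsts_covering_decidable_general
    (step : ℕ → ℕ → Prop) (le : ℕ → ℕ → Prop)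
    (hrefl : ∀ a, le a a)
    (htrans : ∀ a b c, le a b → le b c → le a c)
    (hwqo : ∀ s : ℕ → ℕ, ∃ i j : ℕ, i < j ∧ le (s i) (s j))
    (hupsim : ∀ s s' t, step s s' → le s t →
      ∃ t', Relation.ReflTransGen step t t' ∧ le s' t')
    (hledec : ComputablePred fun p : ℕ × ℕ => le p.1 p.2)
    (hpb : ∃ pb : ℕ → List ℕ, Computable pb ∧
      ∀ s x, (∃ b ∈ pb s, le b x) ↔
        ∃ w, (∃ t, le s t ∧ step w t) ∧ le w x) :
    ComputablePred fun p : ℕ × ℕ =>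
      ∃ t', Relation.ReflTransGen step p.1 t' ∧ le p.2 t' := by
  obtain ⟨pb, hpbc, hpb⟩ := hpb
  classical
  have hsat := exists_saturated (pb := pb) hwqo
  have hK : Computable fun p : ℕ × ℕ => predBasisIter pb p.2 (Nat.find (hsat p.2)) :=
    (computable₂_predBasisIter hpbc).comp .snd
      ((Computable.find (computablePred_saturated hledec hpbc) hsat).comp .snd)
  refine (ComputablePred.list_exists (p := fun p b => le b p.1) hK
    (hledec.comp (Computable.pair Computable.snd (Computable.fst.comp Computable.fst)))).of_eq
    fun p => ?_
  exact (covers_iff_of_saturated hrefl htrans hupsim hpb (Nat.find_spec _)).symm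

/-- Decidability of the covering problem for a WSTS (states encoded as naturals)
with decidable ordering and an effective pred-basis. -/
theorem wsts_covering_decidable
    (step : ℕ → ℕ → Prop) (le : ℕ → ℕ → Prop)
    (hrefl : ∀ a, le a a)
    (htrans : ∀ a b c, le a b → le b c → le a c)
    (hwqo : ∀ s : ℕ → ℕ, ∃ i j : ℕ, i < j ∧ le (s i) (s j))
    (hupsim : ∀ s s' t, step s s' → le s t →
      ∃ t', Relation.ReflTransGen step t t' ∧ le s' t')
    (hfin : ∀ s, {t | step s t}.Finite)
    (hledec : ComputablePred fun p : ℕ × ℕ => le p.1 p.2)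
    (hpb : ∃ pb : ℕ → List ℕ, Computable pb ∧
      ∀ s x, (∃ b ∈ pb s, le b x) ↔
        ∃ w, (∃ t, le s t ∧ step w t) ∧ le w x) :
    ComputablePred fun p : ℕ × ℕ =>
      ∃ t', Relation.ReflTransGen step p.1 t' ∧ le p.2 t' :=
  wsts_covering_decidable_general step le hrefl htrans hwqo hupsim hledec hpb
end
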